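/- For τ > 0, a_L < 0 and any a_R ∈ ℝ: √2 ∫₀^∞ (a_L z − a_R τ)/(z+τ)^{3/2} · e^{−(a_L z − a_R τ)²/(2(z+τ))} dz = −2√π · e^{2a_L(a_L+a_R)τ} · erfc(−(2a_L+a_R)√τ/√2). -/

import Mathlib

open Real MeasureTheory Set Filter Topology

/-- The complementary error function. -/
noncomputable def erfc (x : ℝ) : ℝ :=
  (2 / Real.sqrt π) * ∫ u in Set.Ioi x, Real.exp (-u^2)

noncomputable def E (x : ℝ) : ℝ := ∫ u in Set.Ioi x, Real.exp (-u^2)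

lemma gauss_int : Integrable (fun u : ℝ => Real.exp (-u^2)) := by
  simpa using integrable_exp_neg_mul_sq (one_pos)

lemma gauss_total : (∫ u : ℝ, Real.exp (-u^2)) = Real.sqrt π := by
  simpa using integral_gaussian 1

lemma E_eq (x : ℝ) : E x = Real.sqrt π - ∫ u in Set.Iic x, Real.exp (-u^2) := by
  rw [eq_sub_iff_add_eq, add_comm, ← gauss_total]
  exact intervalIntegral.integral_Iic_add_Ioi gauss_int.integrableOn gauss_int.integrableOn

lemma E_hasDerivAt (x : ℝ) : HasDerivAt E (-(Real.exp (-x^2))) x := by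
  have h : ∀ y : ℝ, E y = (Real.sqrt π - ∫ u in Set.Iic (0:ℝ), Real.exp (-u^2))
      - ∫ u in (0:ℝ)..y, Real.exp (-u^2) := by
    intro y
    rw [E_eq, ← intervalIntegral.integral_Iic_sub_Iic gauss_int.integrableOn
      gauss_int.integrableOn]
    ring
  have hd : HasDerivAt (fun y => ∫ u in (0:ℝ)..y, Real.exp (-u^2)) (Real.exp (-x^2)) x :=
    intervalIntegral.integral_hasDerivAt_right gauss_int.intervalIntegrable
      ((Real.continuous_exp.comp (by continuity)).stronglyMeasurableAtFilter _ _)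
      (Real.continuous_exp.comp (by continuity)).continuousAt
  rw [funext h]
  have h' := (hasDerivAt_const x (Real.sqrt π - ∫ u in Set.Iic (0:ℝ), Real.exp (-u^2))).sub hd
  simp only [zero_sub] at h'
  exact h'

lemma E_tendsto_atBot : Tendsto E atBot (𝓝 (Real.sqrt π)) := by
  have h0 : Tendsto (fun x : ℝ => ∫ u in Set.Iic x, Real.exp (-u^2)) atBot (𝓝 0) := by
    have hle : ∀ᶠ x in atBot, (∫ u in Set.Iic x, Real.exp (-u^2)) ≤ Real.exp x := by
      filter_upwards [eventually_le_atBot (-1 : ℝ)] with x hx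
      calc (∫ u in Set.Iic x, Real.exp (-u^2)) ≤ ∫ u in Set.Iic x, Real.exp u := by
            apply setIntegral_mono_on gauss_int.integrableOn (integrableOn_exp_Iic x)
              measurableSet_Iic
            intro u hu
            apply Real.exp_le_exp.2
            nlinarith [Set.mem_Iic.1 hu]
        _ = Real.exp x := integral_exp_Iic x
    have hge : ∀ᶠ x in atBot, (0:ℝ) ≤ ∫ u in Set.Iic x, Real.exp (-u^2) := by
      filter_upwards with x
      exact setIntegral_nonneg measurableSet_Iic (fun u _ => (Real.exp_pos _).le)
    exact tendsto_of_tendsto_of_tendsto_of_le_of_le' tendsto_const_nhds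
      Real.tendsto_exp_atBot hge hle
  have := (tendsto_const_nhds (x := Real.sqrt π) (f := atBot (α := ℝ))).sub h0
  rw [funext E_eq]
  simpa using this

lemma E_add (x : ℝ) : E x + E (-x) = Real.sqrt π := by
  have : E (-x) = ∫ u in Set.Iic x, Real.exp (-u^2) := by
    rw [E, ← neg_neg x, ← integral_comp_neg_Ioi]
    simp
  rw [this, E_eq]; ring

lemma sqrt_tendsto_atTop : Tendsto Real.sqrt atTop atTop := by
  apply tendsto_atTop_atTop.2
  intro b
  refine ⟨max 0 (b^2), fun a ha => ?_⟩
  calc b ≤ |b| := le_abs_self b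
    _ = Real.sqrt (b^2) := (Real.sqrt_sq_eq_abs b).symm
    _ ≤ Real.sqrt a := Real.sqrt_le_sqrt (le_trans (le_max_right _ _) ha)

section main
variable (aL aR τ : ℝ)

/-- the antiderivative -/
noncomputable def gfun (t : ℝ) : ℝ :=
  (-2 * Real.sqrt 2 * Real.exp (2*aL*(aL+aR)*τ)) *
    E ((aL*(t+τ) + (aL+aR)*τ) / Real.sqrt (2*(t+τ)))

/-- the integrand -/
noncomputable def ffun (z : ℝ) : ℝ :=
  (aL * z - aR * τ) / (z + τ) ^ ((3:ℝ)/2) * Real.exp (-(aL * z - aR * τ)^2 / (2 * (z + τ)))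

lemma key_alg (aL aR τ z X : ℝ) (hz' : 0 < z + τ) (hX2 : X^2 = 2*(z+τ))
    (hXpos : 0 < X) (hS : Real.sqrt (z+τ) = X / Real.sqrt 2) :
    (-2 * Real.sqrt 2 * Real.exp (2*aL*(aL+aR)*τ)) *
      (-(Real.exp (-((aL*(z+τ) + (aL+aR)*τ)/X)^2)) *
        ((aL * X - (aL*(z+τ) + (aL+aR)*τ) * (1 / (2 * X) * 2)) / X^2))
    = ffun aL aR τ z := by
  have hXne : X ≠ 0 := hXpos.ne'
  have hs2 : Real.sqrt 2 ≠ 0 := by positivity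
  have hzt : z + τ = X^2/2 := by linarith
  have hrpow : (z + τ) ^ ((3:ℝ)/2) = (z+τ) * (X / Real.sqrt 2) := by
    rw [show (3:ℝ)/2 = 1 + 1/2 by norm_num, Real.rpow_add hz', Real.rpow_one,
      ← Real.sqrt_eq_rpow, hS]
  have hexp : Real.exp (2*aL*(aL+aR)*τ) * Real.exp (-((aL*(z+τ) + (aL+aR)*τ)/X)^2)
      = Real.exp (-(aL * z - aR * τ)^2 / (2 * (z + τ))) := by
    rw [← Real.exp_add]
    congr 1
    rw [div_pow, hX2]
    field_simp
    ring
  have h1 : aL * X - (aL*(z+τ) + (aL+aR)*τ) * (1 / (2 * X) * 2) = (aL*z - aR*τ)/X := by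
    field_simp
    linear_combination aL * hX2
  rw [ffun, hrpow, ← hexp, h1, hzt]
  field_simp

lemma gfun_hasDerivAt (hτ : 0 < τ) {z : ℝ} (hz : 0 ≤ z) :
    HasDerivAt (gfun aL aR τ) (ffun aL aR τ z) z := by
  have hz' : 0 < z + τ := by linarith
  have h2 : (0:ℝ) < 2*(z+τ) := by linarith
  have hX2 : (Real.sqrt (2*(z+τ)))^2 = 2*(z+τ) := Real.sq_sqrt h2.le
  have hXpos : 0 < Real.sqrt (2*(z+τ)) := Real.sqrt_pos.2 h2
  have hS : Real.sqrt (z+τ) = Real.sqrt (2*(z+τ)) / Real.sqrt 2 := by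
    rw [Real.sqrt_mul (by norm_num : (0:ℝ) ≤ 2)]
    field_simp
  have hinner : HasDerivAt (fun t : ℝ => 2*(t+τ)) 2 z := by
    simpa using ((hasDerivAt_id z).add_const τ).const_mul 2
  have hd : HasDerivAt (fun t => Real.sqrt (2*(t+τ))) (1 / (2 * Real.sqrt (2*(z+τ))) * 2) z :=
    (Real.hasDerivAt_sqrt h2.ne').comp z hinner
  have hn : HasDerivAt (fun t : ℝ => aL*(t+τ) + (aL+aR)*τ) aL z := by
    simpa using (((hasDerivAt_id z).add_const τ).const_mul aL).add_const ((aL+aR)*τ)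
  have hw : HasDerivAt (fun t => (aL*(t+τ) + (aL+aR)*τ) / Real.sqrt (2*(t+τ)))
      ((aL * Real.sqrt (2*(z+τ)) - (aL*(z+τ) + (aL+aR)*τ) * (1 / (2 * Real.sqrt (2*(z+τ))) * 2))
        / (Real.sqrt (2*(z+τ)))^2) z :=
    hn.div hd hXpos.ne'
  have hEw := (E_hasDerivAt ((aL*(z+τ) + (aL+aR)*τ) / Real.sqrt (2*(z+τ)))).comp z hw
  have hg := hEw.const_mul (-2 * Real.sqrt 2 * Real.exp (2*aL*(aL+aR)*τ))
  have key := key_alg aL aR τ z (Real.sqrt (2*(z+τ))) hz' hX2 hXpos hS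
  rw [key] at hg
  exact hg

lemma gfun_tendsto (hτ : 0 < τ) (hL : aL < 0) :
    Tendsto (gfun aL aR τ) atTop
      (𝓝 ((-2 * Real.sqrt 2 * Real.exp (2*aL*(aL+aR)*τ)) * Real.sqrt π)) := by
  have hsq : Tendsto (fun t : ℝ => Real.sqrt (t+τ)) atTop atTop :=
    sqrt_tendsto_atTop.comp (tendsto_atTop_add_const_right _ τ tendsto_id)
  have h1 : Tendsto (fun t : ℝ => Real.sqrt (t+τ) * (aL / Real.sqrt 2)) atTop atBot :=
    hsq.atTop_mul_const_of_neg (div_neg_of_neg_of_pos hL (Real.sqrt_pos.2 two_pos))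
  have h2 : Tendsto (fun t : ℝ => (aL+aR)*τ / (Real.sqrt 2 * Real.sqrt (t+τ))) atTop (𝓝 0) :=
    Tendsto.div_atTop tendsto_const_nhds (hsq.const_mul_atTop (Real.sqrt_pos.2 two_pos))
  have h3 := h2.add_atBot h1
  have hw : Tendsto (fun t : ℝ => (aL*(t+τ) + (aL+aR)*τ) / Real.sqrt (2*(t+τ))) atTop atBot := by
    apply h3.congr'
    filter_upwards [eventually_ge_atTop (0:ℝ)] with t ht
    have ht' : 0 < t + τ := by linarith
    have hsp : 0 < Real.sqrt (t+τ) := Real.sqrt_pos.2 ht'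
    have hs2 : (0:ℝ) < Real.sqrt 2 := Real.sqrt_pos.2 two_pos
    have hsqq : Real.sqrt (t+τ) ^ 2 = t + τ := Real.sq_sqrt ht'.le
    rw [Real.sqrt_mul (by norm_num : (0:ℝ) ≤ 2)]
    field_simp
    linear_combination aL * hsqq
  exact (E_tendsto_atBot.comp hw).const_mul _

lemma ffun_integrableOn (hτ : 0 < τ) (hL : aL < 0) :
    IntegrableOn (ffun aL aR τ) (Set.Ioi 0) := by
  set M := max 0 (aR*τ/aL) with hM
  have hM0 : (0:ℝ) ≤ M := le_max_left _ _
  have hIoi : IntegrableOn (ffun aL aR τ) (Set.Ioi M) := by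
    apply integrableOn_Ioi_deriv_of_nonpos'
      (fun x hx => gfun_hasDerivAt aL aR τ hτ (le_trans hM0 hx))
      ?_ (gfun_tendsto aL aR τ hτ hL)
    intro x hx
    have hx0 : 0 < x := lt_of_le_of_lt hM0 hx
    have hxx : aR*τ/aL < x := lt_of_le_of_lt (le_max_right _ _) hx
    have hnum : aL * x - aR * τ ≤ 0 := by
      have h1 := mul_lt_mul_of_neg_left hxx hL
      have h2 : aL * (aR*τ/aL) = aR*τ := by rw [mul_comm, div_mul_cancel₀ _ (ne_of_lt hL)]
      linarith
    have hpow : 0 < (x+τ)^((3:ℝ)/2) := Real.rpow_pos_of_pos (by linarith) _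
    have hdiv : (aL*x - aR*τ)/(x+τ)^((3:ℝ)/2) ≤ 0 :=
      div_nonpos_of_nonpos_of_nonneg hnum hpow.le
    exact mul_nonpos_of_nonpos_of_nonneg hdiv (Real.exp_pos _).le
  have hcont : ContinuousOn (ffun aL aR τ) (Set.Icc 0 M) := by
    have hne : ∀ x ∈ Set.Icc (0:ℝ) M, x + τ ≠ 0 := by
      intro x hx; have := hx.1; positivity
    apply ContinuousOn.mul
    · apply ContinuousOn.div
      · exact ((continuous_const.mul continuous_id).sub continuous_const).continuousOn
      · exact (ContinuousOn.rpow_const (continuous_id.add continuous_const).continuousOn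
          (fun x hx => Or.inl (hne x hx)))
      · intro x hx
        exact ne_of_gt (Real.rpow_pos_of_pos (by have := hx.1; positivity) _)
    · apply Real.continuous_exp.comp_continuousOn
      apply ContinuousOn.div
      · exact (Continuous.neg (by continuity)).continuousOn
      · exact (continuous_const.mul (continuous_id.add continuous_const)).continuousOn
      · intro x hx
        have := hx.1
        positivity
  have hIoc : IntegrableOn (ffun aL aR τ) (Set.Ioc 0 M) :=
    (hcont.integrableOn_Icc).mono_set Set.Ioc_subset_Icc_self
  rw [← Set.Ioc_union_Ioi_eq_Ioi hM0]
  exact hIoc.union hIoi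

end main

/-- integral identity for the long-time asymptotics. -/
theorem stmt10 (aL aR τ : ℝ) (hτ : 0 < τ) (hL : aL < 0) :
    Real.sqrt 2 *
      ∫ z in Set.Ioi (0:ℝ),
        (aL * z - aR * τ) / (z + τ) ^ ((3:ℝ)/2) *
          Real.exp (-(aL * z - aR * τ)^2 / (2 * (z + τ)))
    = -2 * Real.sqrt π * Real.exp (2 * aL * (aL + aR) * τ) *
        erfc (-(2*aL + aR) * Real.sqrt τ / Real.sqrt 2) := by
  have hτs : 0 < Real.sqrt τ := Real.sqrt_pos.2 hτ
  have hτ2 : Real.sqrt τ ^ 2 = τ := Real.sq_sqrt hτ.le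
  have hπ : (0:ℝ) < Real.sqrt π := Real.sqrt_pos.2 Real.pi_pos
  have hs2 : (0:ℝ) < Real.sqrt 2 := Real.sqrt_pos.2 two_pos
  have h2s : Real.sqrt 2 * Real.sqrt 2 = 2 := Real.mul_self_sqrt (by norm_num)
  have hint : (∫ z in Set.Ioi (0:ℝ), ffun aL aR τ z)
      = (-2 * Real.sqrt 2 * Real.exp (2*aL*(aL+aR)*τ)) * Real.sqrt π - gfun aL aR τ 0 :=
    integral_Ioi_of_hasDerivAt_of_tendsto' (fun x hx => gfun_hasDerivAt aL aR τ hτ hx)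
      (ffun_integrableOn aL aR τ hτ hL) (gfun_tendsto aL aR τ hτ hL)
  have harg : (aL*((0:ℝ)+τ) + (aL+aR)*τ) / Real.sqrt (2*((0:ℝ)+τ))
      = (2*aL+aR) * Real.sqrt τ / Real.sqrt 2 := by
    rw [zero_add, Real.sqrt_mul (by norm_num : (0:ℝ) ≤ 2)]
    field_simp
    linear_combination (-(2*aL+aR)) * hτ2
  have hE0 : E ((2*aL+aR) * Real.sqrt τ / Real.sqrt 2)
      = Real.sqrt π - E (-((2*aL+aR) * Real.sqrt τ / Real.sqrt 2)) := by
    have := E_add ((2*aL+aR) * Real.sqrt τ / Real.sqrt 2); linarith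
  have herfc : erfc (-(2*aL + aR) * Real.sqrt τ / Real.sqrt 2)
      = 2/Real.sqrt π * E (-((2*aL+aR) * Real.sqrt τ / Real.sqrt 2)) := by
    rw [show -(2*aL + aR) * Real.sqrt τ / Real.sqrt 2
        = -((2*aL+aR) * Real.sqrt τ / Real.sqrt 2) by ring]
    rfl
  show Real.sqrt 2 * (∫ z in Set.Ioi (0:ℝ), ffun aL aR τ z) = _
  rw [hint, gfun, harg, hE0, herfc]
  generalize E (-((2*aL+aR) * Real.sqrt τ / Real.sqrt 2)) = Ev
  field_simp
  linear_combination (-Ev) * h2s
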